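/- Let X, Y, Z be finite index types, let Φ₀, Φ₁ : Matrix X X ℂ →ₗ[ℂ] Matrix Y Y ℂ be quantum channels, and let ρ be a separable density operator on X × Z. Then there exists a density operator σ on X such that ‖((Φ₀ − Φ₁) ⊗ id_Z)(ρ)‖₁ ≤ ‖Φ₀(σ) − Φ₁(σ)‖₁. (In other words, the maximum of ‖((Φ₀ − Φ₁) ⊗ id_Z)(ρ)‖₁ over separable density operators ρ equals ‖Φ₀ − Φ₁‖_NE: an ancillary system is useless for channel discrimination unless it is entangled with the input.) -/

import Mathlib

open Matrix Kronecker BigOperators ComplexOrder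

/-- The positive semidefinite square root `Matrix.PosSemidef.sqrt` of the older Mathlib,
spelled out (it was removed from Mathlib). -/
noncomputable def Matrix.PosSemidef.sqrt {n : Type*} [Fintype n] [DecidableEq n]
    {A : Matrix n n ℂ} (hA : A.PosSemidef) : Matrix n n ℂ :=
  hA.1.eigenvectorUnitary.1 * diagonal ((↑) ∘ (√·) ∘ hA.1.eigenvalues) *
  (star hA.1.eigenvectorUnitary : Matrix n n ℂ)

noncomputable def traceNorm {n : Type*} [Fintype n] [DecidableEq n] (A : Matrix n n ℂ) : ℝ :=
  ((Matrix.posSemidef_conjTranspose_mul_self A).sqrt.trace).re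

def IsDensity {n : Type*} [Fintype n] (ρ : Matrix n n ℂ) : Prop :=
  ρ.PosSemidef ∧ ρ.trace = 1

def tensorId {X Y Z : Type*} (Φ : Matrix X X ℂ → Matrix Y Y ℂ)
    (ρ : Matrix (X × Z) (X × Z) ℂ) : Matrix (Y × Z) (Y × Z) ℂ :=
  Matrix.of fun p q => Φ (Matrix.of fun x x' => ρ (x, p.2) (x', q.2)) p.1 q.1

noncomputable def ChoiMatrix {X Y : Type*} [Fintype X] [DecidableEq X] [Fintype Y]
    (Φ : Matrix X X ℂ → Matrix Y Y ℂ) : Matrix (Y × X) (Y × X) ℂ :=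
  ∑ j : X, ∑ k : X, (Φ (Matrix.single j k 1)) ⊗ₖ (Matrix.single j k 1)

def IsChannel {X Y : Type*} [Fintype X] [DecidableEq X] [Fintype Y]
    (Φ : Matrix X X ℂ →ₗ[ℂ] Matrix Y Y ℂ) : Prop :=
  (∀ M, (Φ M).trace = M.trace) ∧ (ChoiMatrix (⇑Φ)).PosSemidef

def SeparableOp {Y Z : Type*} [Fintype Y] [Fintype Z]
    (P : Matrix (Y × Z) (Y × Z) ℂ) : Prop :=
  ∃ (N : ℕ) (Q : Fin N → Matrix Y Y ℂ) (R : Fin N → Matrix Z Z ℂ),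
    (∀ i, (Q i).PosSemidef) ∧ (∀ i, (R i).PosSemidef) ∧ P = ∑ i, Q i ⊗ₖ R i

def partialTranspose {Y Z : Type*} (M : Matrix (Y × Z) (Y × Z) ℂ) :
    Matrix (Y × Z) (Y × Z) ℂ :=
  Matrix.of fun p q => M (p.1, q.2) (q.1, p.2)

def IsPPT {Y Z : Type*} [Fintype Y] [Fintype Z] (M : Matrix (Y × Z) (Y × Z) ℂ) : Prop :=
  M.PosSemidef ∧ (partialTranspose M).PosSemidef

/-!
Write `ρ = ∑ᵢ Qᵢ ⊗ Rᵢ` and normalise `Qᵢ = qᵢ σᵢ` with `σᵢ` a density operator. Then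
`((Φ₀ - Φ₁) ⊗ id)(ρ) = ∑ᵢ qᵢ (Φ₀ - Φ₁)(σᵢ) ⊗ Rᵢ`. The trace norm is multiplicative under `⊗` and
subadditive on Hermitian matrices, so the left-hand side is at most the convex combination
`∑ᵢ qᵢ tr(Rᵢ) ‖(Φ₀ - Φ₁)(σᵢ)‖₁`, which the best `σᵢ` dominates.

Subadditivity: for Hermitian `H` the sign `S` of `H` is a self-adjoint contraction with
`tr (S H) = ‖H‖₁`, while `re tr (T K) ≤ ‖K‖₁` for every such contraction `T` and Hermitian `K`
(split `K = K⁺ - K⁻` and use `tr ((1 ∓ T) K^±) ≥ 0`).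
-/

open scoped MatrixOrder

section TraceNorm

variable {n m : Type*} [Fintype n] [DecidableEq n] [Fintype m] [DecidableEq m]

lemma Matrix.PosSemidef.sqrt_eq_cfcSqrt {A : Matrix n n ℂ} (hA : A.PosSemidef) :
    hA.sqrt = CFC.sqrt A := by
  rw [CFC.sqrt_eq_cfc, cfc_nnreal_eq_real _ A, hA.1.cfc_eq]
  simp only [IsHermitian.cfc, Matrix.PosSemidef.sqrt, Unitary.conjStarAlgAut_apply]
  congr 2
  ext i j
  simp only [diagonal_apply, Function.comp_apply]
  split_ifs
  · simp [Real.coe_sqrt, Real.coe_toNNReal _ (hA.eigenvalues_nonneg i)]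
  · rfl

lemma traceNorm_eq_re_trace_abs (A : Matrix n n ℂ) : traceNorm A = (CFC.abs A).trace.re := by
  rw [traceNorm, PosSemidef.sqrt_eq_cfcSqrt, CFC.abs, star_eq_conjTranspose]

lemma traceNorm_nonneg (A : Matrix n n ℂ) : 0 ≤ traceNorm A := by
  rw [traceNorm_eq_re_trace_abs]
  exact (Complex.nonneg_iff.mp (CFC.abs_nonneg A).posSemidef.trace_nonneg).1

lemma traceNorm_of_nonneg {A : Matrix n n ℂ} (hA : 0 ≤ A) : traceNorm A = A.trace.re := by
  rw [traceNorm_eq_re_trace_abs, CFC.abs_of_nonneg A hA]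

lemma traceNorm_smul (c : ℂ) (A : Matrix n n ℂ) : traceNorm (c • A) = ‖c‖ * traceNorm A := by
  rw [traceNorm_eq_re_trace_abs, traceNorm_eq_re_trace_abs, CFC.abs_smul, trace_smul]
  simp

lemma CFC.abs_kronecker (A : Matrix n n ℂ) (B : Matrix m m ℂ) :
    CFC.abs (A ⊗ₖ B) = CFC.abs A ⊗ₖ CFC.abs B := by
  rw [CFC.abs, CFC.sqrt_eq_iff _ _ (star_mul_self_nonneg _)
    ((CFC.abs_nonneg A).posSemidef.kronecker (CFC.abs_nonneg B).posSemidef).nonneg,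
    ← mul_kronecker_mul, CFC.abs_mul_abs, CFC.abs_mul_abs, mul_kronecker_mul,
    star_eq_conjTranspose, star_eq_conjTranspose, star_eq_conjTranspose, conjTranspose_kronecker]

lemma traceNorm_kronecker (A : Matrix n n ℂ) (B : Matrix m m ℂ) :
    traceNorm (A ⊗ₖ B) = traceNorm A * traceNorm B := by
  have hA := (CFC.abs_nonneg A).posSemidef.trace_nonneg
  have hB := (CFC.abs_nonneg B).posSemidef.trace_nonneg
  simp only [traceNorm_eq_re_trace_abs, CFC.abs_kronecker, trace_kronecker, Complex.mul_re,
    (Complex.nonneg_iff.mp hA).2.symm, (Complex.nonneg_iff.mp hB).2.symm, mul_zero, sub_zero]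

lemma Matrix.trace_mul_nonneg {A B : Matrix n n ℂ} (hA : 0 ≤ A) (hB : 0 ≤ B) :
    0 ≤ (A * B).trace := by
  have h := (star_left_conjugate_nonneg hB (CFC.sqrt A)).posSemidef.trace_nonneg
  rwa [(CFC.sqrt_nonneg A).isSelfAdjoint.star_eq, trace_mul_cycle, CFC.sqrt_mul_sqrt_self A hA] at h

lemma exists_mul_eq_cfcAbs {A : Matrix n n ℂ} (hA : IsSelfAdjoint A) :
    ∃ S : Matrix n n ℂ, -1 ≤ S ∧ S ≤ 1 ∧ S * A = CFC.abs A := by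
  have hcont (f : ℝ → ℝ) : ContinuousOn f (spectrum ℝ A) := finite_real_spectrum.continuousOn f
  let sgn : ℝ → ℝ := fun x => if 0 ≤ x then 1 else -1
  have hsgn (x : ℝ) : (-1 ≤ sgn x ∧ sgn x ≤ 1) ∧ sgn x * x = ‖x‖ := by
    by_cases hx : 0 ≤ x
    · simp [sgn, hx, abs_of_nonneg hx]
    · simp [sgn, hx, abs_of_neg (not_le.mp hx)]
  refine ⟨cfc sgn A, ?_, cfc_le_one _ A fun x _ => (hsgn x).1.2, ?_⟩
  · simpa using algebraMap_le_cfc sgn (-1) A (fun x _ => (hsgn x).1.1) (hcont _)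
  · calc cfc sgn A * A = cfc (fun x => sgn x * id x) A := by
          rw [cfc_mul sgn id A (hcont _) (hcont _), cfc_id ℝ A]
      _ = CFC.abs A := by
          rw [CFC.abs_eq_cfc_norm A hA]
          exact cfc_congr fun x _ => (hsgn x).2

lemma re_trace_mul_le_traceNorm {S H : Matrix n n ℂ} (hS₁ : -1 ≤ S) (hS₂ : S ≤ 1)
    (hH : IsSelfAdjoint H) : (S * H).trace.re ≤ traceNorm H := by
  have hpos := (Matrix.trace_mul_nonneg (sub_nonneg.mpr hS₂) (CFC.posPart_nonneg H)).1
  have hneg := (Matrix.trace_mul_nonneg (sub_nonneg.mpr hS₁) (CFC.negPart_nonneg H)).1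
  rw [traceNorm_eq_re_trace_abs, ← CFC.posPart_add_negPart H]
  conv_lhs => rw [← CFC.posPart_sub_negPart H]
  simp only [sub_mul, mul_sub, sub_neg_eq_add, add_mul, one_mul, trace_sub, trace_add,
    Complex.sub_re, Complex.add_re, Complex.zero_re] at hpos hneg ⊢
  linarith

lemma traceNorm_sum_le {ι : Type*} (s : Finset ι) (H : ι → Matrix n n ℂ)
    (hH : ∀ i ∈ s, IsSelfAdjoint (H i)) :
    traceNorm (∑ i ∈ s, H i) ≤ ∑ i ∈ s, traceNorm (H i) := by
  obtain ⟨S, hS₁, hS₂, hS⟩ := exists_mul_eq_cfcAbs (isSelfAdjoint_sum s hH)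
  calc traceNorm (∑ i ∈ s, H i) = ∑ i ∈ s, (S * H i).trace.re := by
        rw [traceNorm_eq_re_trace_abs, ← hS, Matrix.mul_sum, trace_sum, Complex.re_sum]
    _ ≤ ∑ i ∈ s, traceNorm (H i) :=
        Finset.sum_le_sum fun i hi => re_trace_mul_le_traceNorm hS₁ hS₂ (hH i hi)

end TraceNorm

lemma IsDensity.nonempty {n : Type*} [Fintype n] {ρ : Matrix n n ℂ} (hρ : IsDensity ρ) :
    Nonempty n := by
  by_contra h
  rw [not_nonempty_iff] at h
  simpa [trace] using hρ.2

section Density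

variable {n m : Type*} [Fintype n] [DecidableEq n] [Fintype m] [DecidableEq m]

lemma Matrix.PosSemidef.exists_isDensity_smul_eq [Nonempty n] {Q : Matrix n n ℂ}
    (hQ : Q.PosSemidef) : ∃ σ, IsDensity σ ∧ Q = (Q.trace.re : ℂ) • σ := by
  have htr : Q.trace = (Q.trace.re : ℂ) := Complex.eq_re_of_ofReal_le hQ.trace_nonneg
  by_cases h0 : Q.trace.re = 0
  · refine ⟨((Fintype.card n : ℂ)⁻¹) • 1, ⟨PosSemidef.one.smul (by positivity), ?_⟩, ?_⟩
    · simp [trace_smul]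
    · rw [h0, Complex.ofReal_zero, zero_smul, ← hQ.trace_eq_zero_iff, htr, h0, Complex.ofReal_zero]
  · refine ⟨(Q.trace.re : ℂ)⁻¹ • Q, ⟨hQ.smul ?_, ?_⟩, ?_⟩
    · exact inv_nonneg.mpr (htr ▸ hQ.trace_nonneg)
    · rw [trace_smul, smul_eq_mul, ← htr, inv_mul_cancel₀ (htr ▸ Complex.ofReal_ne_zero.mpr h0)]
    · rw [smul_smul, mul_inv_cancel₀ (Complex.ofReal_ne_zero.mpr h0), one_smul]

lemma exists_isDensity_traceNorm_map_eq [Nonempty n] (Ψ : Matrix n n ℂ →ₗ[ℂ] Matrix m m ℂ)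
    {Q : Matrix n n ℂ} (hQ : Q.PosSemidef) :
    ∃ σ, IsDensity σ ∧ traceNorm (Ψ Q) = traceNorm Q * traceNorm (Ψ σ) := by
  obtain ⟨σ, hσ, hQσ⟩ := hQ.exists_isDensity_smul_eq
  refine ⟨σ, hσ, ?_⟩
  conv_lhs => rw [hQσ]
  rw [traceNorm_of_nonneg hQ.nonneg, map_smul, traceNorm_smul,
    Complex.norm_of_nonneg (Complex.nonneg_iff.mp hQ.trace_nonneg).1]

end Density

section Channel

variable {X Y : Type*} [Fintype X] [DecidableEq X] [Fintype Y]

lemma choiMatrix_apply (Φ : Matrix X X ℂ → Matrix Y Y ℂ) (y y' : Y) (a b : X) :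
    ChoiMatrix Φ (y, a) (y', b) = Φ (single a b 1) y y' := by
  simp [ChoiMatrix, Matrix.sum_apply, single_apply, ite_and]

lemma conjTranspose_map_conjTranspose_of_isHermitian_choiMatrix
    {Φ : Matrix X X ℂ →ₗ[ℂ] Matrix Y Y ℂ} (hJ : (ChoiMatrix Φ).IsHermitian) (M : Matrix X X ℂ) :
    (Φ Mᴴ)ᴴ = Φ M := by
  induction M using Matrix.induction_on' with
  | h_zero => simp
  | h_add p q hp hq => rw [conjTranspose_add, map_add, conjTranspose_add, hp, hq, map_add]
  | h_std_basis a b x =>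
    have hbasis : (Φ (single b a 1))ᴴ = Φ (single a b 1) := by
      ext y y'
      simpa [choiMatrix_apply] using congr_fun₂ hJ.eq (y, a) (y', b)
    have hsmul (c : ℂ) (i j : X) : single i j c = c • single i j 1 := by
      rw [smul_single, smul_eq_mul, mul_one]
    rw [conjTranspose_single, hsmul, hsmul x, map_smul, map_smul, conjTranspose_smul, hbasis,
      star_star]

lemma isHermitian_map_of_isHermitian_choiMatrix {Φ : Matrix X X ℂ →ₗ[ℂ] Matrix Y Y ℂ}
    (hJ : (ChoiMatrix Φ).IsHermitian) {M : Matrix X X ℂ} (hM : M.IsHermitian) :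
    (Φ M).IsHermitian := by
  rw [IsHermitian, ← hM.eq, conjTranspose_map_conjTranspose_of_isHermitian_choiMatrix hJ, hM.eq]

end Channel

lemma tensorId_sum_kronecker {X Y Z ι : Type*}
    (Φ : Matrix X X ℂ →ₗ[ℂ] Matrix Y Y ℂ) (s : Finset ι)
    (Q : ι → Matrix X X ℂ) (R : ι → Matrix Z Z ℂ) :
    tensorId Φ (∑ i ∈ s, Q i ⊗ₖ R i) = ∑ i ∈ s, Φ (Q i) ⊗ₖ R i := by
  have hslice (p q : Z) : (of fun x x' => (∑ i ∈ s, Q i ⊗ₖ R i) (x, p) (x', q))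
      = ∑ i ∈ s, R i p q • Q i := by
    ext x x'
    simp [Matrix.sum_apply, mul_comm]
  ext p q
  rw [tensorId, of_apply, hslice]
  simp [Matrix.sum_apply, mul_comm]

lemma Finset.exists_sum_mul_le {ι : Type*} [Fintype ι] {w : ι → ℝ} (f : ι → ℝ)
    (hw₀ : ∀ i, 0 ≤ w i) (hw₁ : ∑ i, w i = 1) : ∃ j, ∑ i, w i * f i ≤ f j := by
  obtain ⟨j, -, hj⟩ := exists_max_image univ f
    (nonempty_of_sum_ne_zero (hw₁ ▸ one_ne_zero))
  refine ⟨j, ?_⟩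
  calc ∑ i, w i * f i ≤ ∑ i, w i * f j :=
        sum_le_sum fun i _ => mul_le_mul_of_nonneg_left (hj i (mem_univ i)) (hw₀ i)
    _ = f j := by rw [← sum_mul, hw₁, one_mul]

/-- a separable input state gives no advantage over entanglement-free
strategies: there is a density operator `σ` on the input alone doing at least as well. -/
theorem separable_input_no_advantage
    {X Y Z : Type*} [Fintype X] [DecidableEq X] [Fintype Y] [DecidableEq Y]
    [Fintype Z] [DecidableEq Z]
    (Φ₀ Φ₁ : Matrix X X ℂ →ₗ[ℂ] Matrix Y Y ℂ)
    (hΦ₀ : IsChannel Φ₀) (hΦ₁ : IsChannel Φ₁)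
    (ρ : Matrix (X × Z) (X × Z) ℂ) (hρ : IsDensity ρ) (hρsep : SeparableOp ρ) :
    ∃ σ : Matrix X X ℂ, IsDensity σ ∧
      traceNorm (tensorId (fun M => Φ₀ M - Φ₁ M) ρ) ≤ traceNorm (Φ₀ σ - Φ₁ σ) := by
  obtain ⟨N, Q, R, hQ, hR, rfl⟩ := hρsep
  have : Nonempty X := hρ.nonempty.map Prod.fst
  choose σ hσ hΨσ using fun i => exists_isDensity_traceNorm_map_eq (Φ₀ - Φ₁) (hQ i)
  set w : Fin N → ℝ := fun i => traceNorm (Q i) * traceNorm (R i)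
  have hw₁ : ∑ i, w i = 1 := by
    simp only [w, ← traceNorm_kronecker, traceNorm_of_nonneg ((hQ _).kronecker (hR _)).nonneg,
      ← Complex.re_sum, ← trace_sum, hρ.2, Complex.one_re]
  have hΨ (i : Fin N) : ((Φ₀ - Φ₁) (Q i) ⊗ₖ R i).IsHermitian := by
    have hΨQ := (isHermitian_map_of_isHermitian_choiMatrix hΦ₀.2.1 (hQ i).1).sub
      (isHermitian_map_of_isHermitian_choiMatrix hΦ₁.2.1 (hQ i).1)
    rw [IsHermitian, conjTranspose_kronecker, LinearMap.sub_apply, hΨQ.eq, (hR i).1.eq]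
  obtain ⟨j, hj⟩ := Finset.exists_sum_mul_le (fun i => traceNorm ((Φ₀ - Φ₁) (σ i)))
    (fun i => mul_nonneg (traceNorm_nonneg _) (traceNorm_nonneg _)) hw₁
  refine ⟨σ j, hσ j, ?_⟩
  calc traceNorm (tensorId (fun M => Φ₀ M - Φ₁ M) (∑ i, Q i ⊗ₖ R i))
      = traceNorm (∑ i, (Φ₀ - Φ₁) (Q i) ⊗ₖ R i) := by rw [← tensorId_sum_kronecker]; rfl
    _ ≤ ∑ i, traceNorm ((Φ₀ - Φ₁) (Q i) ⊗ₖ R i) := traceNorm_sum_le _ _ fun i _ => hΨ i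
    _ = ∑ i, w i * traceNorm ((Φ₀ - Φ₁) (σ i)) := by
        refine Finset.sum_congr rfl fun i _ => ?_
        rw [traceNorm_kronecker, hΨσ]
        ring
    _ ≤ traceNorm (Φ₀ (σ j) - Φ₁ (σ j)) := hj
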